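/- arXiv:2510.02145 — 6 statements merged into one kernel-verified Lean document; each statement's English description precedes it below -/
import Mathlib

section
/- Let A be an associative ring and define Δ_i(a₁,…,a_i) = Σ_{σ ∈ S_i} sgn(σ)·a_{σ(1)}⋯a_{σ(i)}. For any positive integers k, ℓ and elements a₁,…,a_{2k+2ℓ} ∈ A, the alternating insertion of Δ_{2ℓ} into the first slot of Δ_{2k+1}, summed with signs over all permutations of the 2k+2ℓ arguments and divided by (2k)!·(2ℓ)!, equals Δ_{2k+2ℓ}(a₁,…,a_{2k+2ℓ}). -/
/-!
Expanding `Δ_{N+1}` along its first slot writes `Δ_{N+1}(x, y₁, …, y_N)` as the sum over the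
position `q` of `x` and over `σ ∈ S_N` of
`(-1)^q sgn σ · y_{σ1} ⋯ y_{σq} · x · y_{σ(q+1)} ⋯ y_{σN}`.
With `x = Δ_m(a₁, …, a_m)` and `y_j = a_{m+j}`, each monomial becomes `a ∘ P` for the permutation
`P` that permutes the first `m` arguments by `ρ`, the last `N` by `σ`, and then moves the block
of the first `m` to position `q`. For even `m` that move is an even permutation, so
`sgn P = sgn ρ · sgn σ`, and alternating over all rearrangements of `a` turns the monomial into
`sgn ρ · sgn σ · Δ_{m+N}(a)`. The signs cancel except `(-1)^q`, and for even `N` the alternating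
sum `∑_{q=0}^{N} (-1)^q` is `1`, leaving `m! N! Δ_{m+N}(a)`.
-/

/-- The fully alternated product of `n` elements of an associative ring. -/
def altProd {A : Type*} [Ring A] {n : ℕ} (a : Fin n → A) : A :=
  ∑ σ : Equiv.Perm (Fin n), (Equiv.Perm.sign σ : ℤ) • (List.ofFn (fun i => a (σ i))).prod

open Equiv Equiv.Perm
open scoped Nat

theorem List.ofFn_comp_cycleRange {α : Type*} {n : ℕ} (f : Fin n → α) (j : Fin n) :
    List.ofFn (f ∘ Fin.cycleRange j) =
      ((List.ofFn f).take (j + 1)).rotate 1 ++ (List.ofFn f).drop (j + 1) := by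
  have hj := j.isLt
  have hlen : (((List.ofFn f).take (j + 1)).rotate 1).length = j + 1 := by
    rw [List.length_rotate, List.length_take, List.length_ofFn]; omega
  refine List.ext_getElem (by simp) fun p h₁ _ => ?_
  simp only [List.length_ofFn] at h₁
  rw [List.getElem_ofFn, Function.comp_apply]
  rcases le_or_gt p j with hp | hp
  · rw [List.getElem_append_left (by omega), List.getElem_rotate, List.getElem_take,
      List.getElem_ofFn]
    congr 1
    ext
    rw [Fin.coe_cycleRange_of_le (show (⟨p, h₁⟩ : Fin n) ≤ j from hp)]
    simp only [List.length_take, List.length_ofFn, Fin.ext_iff]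
    rw [min_eq_left (by omega)]
    split_ifs with h
    · rw [h, Nat.mod_self]
    · rw [Nat.mod_eq_of_lt (by omega)]
  · rw [List.getElem_append_right (by omega), List.getElem_drop, List.getElem_ofFn,
      Fin.cycleRange_of_gt (show j < ⟨p, h₁⟩ from hp)]
    congr 1
    ext
    simp only [hlen]
    omega

def Fin.prefixRotation {n : ℕ} (r : ℕ) (hr : r ≤ n) : Perm (Fin n) :=
  if h : r = 0 then 1 else Fin.cycleRange ⟨r - 1, by omega⟩

theorem List.ofFn_comp_prefixRotation {α : Type*} {n : ℕ} (f : Fin n → α) (r : ℕ) (hr : r ≤ n) :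
    List.ofFn (f ∘ Fin.prefixRotation r hr) =
      ((List.ofFn f).take r).rotate 1 ++ (List.ofFn f).drop r := by
  unfold Fin.prefixRotation
  split_ifs with h
  · simp [h]
  · rw [List.ofFn_comp_cycleRange]
    simp only [Nat.sub_add_cancel (Nat.pos_of_ne_zero h)]

theorem List.ofFn_comp_prefixRotation_pow {α : Type*} {n : ℕ} (f : Fin n → α) (r : ℕ)
    (hr : r ≤ n) (s : ℕ) :
    List.ofFn (f ∘ ⇑(Fin.prefixRotation r hr ^ s)) =
      ((List.ofFn f).take r).rotate s ++ (List.ofFn f).drop r := by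
  induction s with
  | zero => simp
  | succ s ih =>
    rw [pow_succ, Perm.coe_mul, ← Function.comp_assoc, List.ofFn_comp_prefixRotation, ih]
    have hlen : (((List.ofFn f).take r).rotate s).length = r := by
      rw [List.length_rotate, List.length_take, List.length_ofFn]; omega
    rw [List.take_left' hlen, List.drop_left' hlen, List.rotate_rotate]

theorem List.rotate_take_append_drop {α : Type*} (l₁ l₂ : List α) (q : ℕ) :
    ((l₁ ++ l₂).take (l₁.length + q)).rotate l₁.length ++ (l₁ ++ l₂).drop (l₁.length + q) =
      l₂.take q ++ l₁ ++ l₂.drop q := by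
  rw [List.take_append, List.drop_append, List.take_of_length_le (by omega),
    List.drop_of_length_le (by omega), Nat.add_sub_cancel_left, List.rotate_append_length_eq,
    List.nil_append]

namespace Fin

variable {N : ℕ}

/-- The permutation `σ'` of `Fin (N + 1)` with `σ' q = 0` and `σ' (q.succAbove i) = (σ i).succ`. -/
def insertionPerm (q : Fin (N + 1)) (σ : Perm (Fin N)) : Perm (Fin (N + 1)) :=
  decomposeFin.symm (0, σ) * cycleRange q

theorem insertionPerm_apply_self (q : Fin (N + 1)) (σ : Perm (Fin N)) :
    insertionPerm q σ q = 0 := by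
  simp [insertionPerm]

theorem sign_insertionPerm (q : Fin (N + 1)) (σ : Perm (Fin N)) :
    sign (insertionPerm q σ) = (-1) ^ (q : ℕ) * sign σ := by
  rw [insertionPerm, Perm.sign_mul, decomposeFin.symm_sign, if_pos rfl, one_mul, sign_cycleRange,
    mul_comm]

theorem cons_comp_insertionPerm {α : Type*} (x : α) (y : Fin N → α) (q : Fin (N + 1))
    (σ : Perm (Fin N)) :
    (Fin.cons x y : Fin (N + 1) → α) ∘ insertionPerm q σ = Fin.cons x (y ∘ σ) ∘ cycleRange q := by
  ext i
  simp only [Function.comp_apply, insertionPerm, Perm.coe_mul]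
  refine Fin.cases ?_ (fun j => ?_) (cycleRange q i)
  · simp
  · simp [decomposeFin_symm_apply_succ]

theorem bijective_insertionPerm :
    Function.Bijective fun p : Fin (N + 1) × Perm (Fin N) => insertionPerm p.1 p.2 := by
  refine (Fintype.bijective_iff_injective_and_card _).mpr ⟨?_, ?_⟩
  · rintro ⟨q, σ⟩ ⟨q', σ'⟩ h
    dsimp only at h
    obtain rfl : q = q' := (insertionPerm q' σ').injective <| by
      rw [insertionPerm_apply_self, ← h, insertionPerm_apply_self]
    rw [insertionPerm, insertionPerm, mul_left_inj] at h
    simpa using decomposeFin.symm.injective h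
  · simp [Fintype.card_perm, Nat.factorial_succ]

end Fin

section Alternation

variable {A : Type*} [Ring A]

theorem sum_sign_smul_prod_comp_perm {n : ℕ} (a : Fin n → A) (P : Perm (Fin n)) :
    ∑ τ : Perm (Fin n), (sign τ : ℤ) • (List.ofFn fun i => a (τ (P i))).prod =
      (sign P : ℤ) • altProd a := by
  rw [altProd, Finset.smul_sum]
  refine Fintype.sum_equiv (Equiv.mulRight P) _ _ fun τ => ?_
  have hsign : (sign P : ℤ) * sign (τ * P) = sign τ := by
    rw [Perm.sign_mul, mul_comm (sign τ), ← Units.val_mul, ← mul_assoc, Int.units_mul_self,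
      one_mul]
  rw [smul_smul, coe_mulRight, hsign]
  rfl

theorem altProd_cons {N : ℕ} (x : A) (y : Fin N → A) :
    altProd (Fin.cons x y : Fin (N + 1) → A) =
      ∑ q : Fin (N + 1), ∑ σ : Perm (Fin N), ((-1) ^ (q : ℕ) * sign σ : ℤ) •
        (((List.ofFn (y ∘ σ)).take q).prod * x * ((List.ofFn (y ∘ σ)).drop q).prod) := by
  rw [altProd, ← Fintype.sum_prod_type']
  refine (Fintype.sum_bijective _ Fin.bijective_insertionPerm _ _ fun p => ?_).symm
  obtain ⟨q, σ⟩ := p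
  dsimp only
  rw [Fin.sign_insertionPerm, Units.val_mul, Units.val_pow_eq_pow_val, Units.val_neg,
    Units.val_one]
  congr 1
  change _ = (List.ofFn ((Fin.cons x y : Fin (N + 1) → A) ∘ Fin.insertionPerm q σ)).prod
  rw [Fin.cons_comp_insertionPerm, List.ofFn_comp_cycleRange, List.ofFn_succ]
  simp [List.rotate_cons_succ, List.take_succ_cons, mul_assoc, Function.comp_def]

section BlockInsertion

variable {m N q : ℕ}

/-- Permute the first `m` entries by `ρ` and the last `N` by `σ`, then move the block of the
first `m` entries to position `q`. -/
def blockInsertionPerm (hq : q ≤ N) (ρ : Perm (Fin m)) (σ : Perm (Fin N)) :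
    Perm (Fin (m + N)) :=
  finSumFinEquiv.permCongr (ρ.sumCongr σ) * Fin.prefixRotation (m + q) (by omega) ^ m

theorem sign_blockInsertionPerm (hq : q ≤ N) (hm : Even m) (ρ : Perm (Fin m))
    (σ : Perm (Fin N)) : sign (blockInsertionPerm hq ρ σ) = sign ρ * sign σ := by
  rw [blockInsertionPerm, Perm.sign_mul, sign_permCongr, sign_sumCongr, map_pow,
    Int.units_pow_eq_pow_mod_two, Nat.even_iff.mp hm, pow_zero, mul_one]

theorem prod_ofFn_comp_blockInsertionPerm {M : Type*} [Monoid M] (hq : q ≤ N)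
    (b : Fin (m + N) → M) (ρ : Perm (Fin m)) (σ : Perm (Fin N)) :
    (List.ofFn (b ∘ blockInsertionPerm hq ρ σ)).prod =
      ((List.ofFn fun j => b (Fin.natAdd m (σ j))).take q).prod *
        (List.ofFn fun i => b (Fin.castAdd N (ρ i))).prod *
        ((List.ofFn fun j => b (Fin.natAdd m (σ j))).drop q).prod := by
  have hb : b ∘ finSumFinEquiv.permCongr (ρ.sumCongr σ) =
      Fin.append (fun i => b (Fin.castAdd N (ρ i))) (fun j => b (Fin.natAdd m (σ j))) := by
    ext i
    refine Fin.addCases (fun i => ?_) (fun j => ?_) i <;> simp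
  have hsplit := List.rotate_take_append_drop (List.ofFn fun i => b (Fin.castAdd N (ρ i)))
    (List.ofFn fun j => b (Fin.natAdd m (σ j))) q
  rw [List.length_ofFn] at hsplit
  rw [blockInsertionPerm, Perm.coe_mul, ← Function.comp_assoc, hb,
    List.ofFn_comp_prefixRotation_pow, List.ofFn_fin_append, hsplit]
  simp only [List.prod_append]

theorem prod_take_mul_altProd_mul_prod_drop (hq : q ≤ N) (b : Fin (m + N) → A)
    (σ : Perm (Fin N)) :
    ((List.ofFn fun j => b (Fin.natAdd m (σ j))).take q).prod *
        altProd (fun i => b (Fin.castAdd N i)) *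
        ((List.ofFn fun j => b (Fin.natAdd m (σ j))).drop q).prod =
      ∑ ρ : Perm (Fin m), (sign ρ : ℤ) • (List.ofFn (b ∘ blockInsertionPerm hq ρ σ)).prod := by
  rw [altProd, Finset.mul_sum, Finset.sum_mul]
  refine Finset.sum_congr rfl fun ρ _ => ?_
  rw [prod_ofFn_comp_blockInsertionPerm, mul_smul_comm, smul_mul_assoc]

theorem sum_sign_smul_prod_take_mul_altProd_mul_prod_drop (hq : q ≤ N) (hm : Even m)
    (a : Fin (m + N) → A) (σ : Perm (Fin N)) :
    ∑ τ : Perm (Fin (m + N)), (sign τ : ℤ) •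
      (((List.ofFn fun j => a (τ (Fin.natAdd m (σ j)))).take q).prod *
        altProd (fun i => a (τ (Fin.castAdd N i))) *
        ((List.ofFn fun j => a (τ (Fin.natAdd m (σ j)))).drop q).prod) =
      ((m ! : ℤ) * sign σ) • altProd a := by
  calc _ = ∑ ρ : Perm (Fin m), (sign ρ : ℤ) • ∑ τ : Perm (Fin (m + N)), (sign τ : ℤ) •
          (List.ofFn fun i => a (τ (blockInsertionPerm hq ρ σ i))).prod := by
        simp only [Finset.smul_sum]
        rw [Finset.sum_comm]
        refine Finset.sum_congr rfl fun τ _ => ?_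
        rw [prod_take_mul_altProd_mul_prod_drop hq (fun i => a (τ i)), Finset.smul_sum]
        exact Finset.sum_congr rfl fun ρ _ => smul_comm _ _ _
    _ = ∑ ρ : Perm (Fin m), (sign σ : ℤ) • altProd a := by
        refine Finset.sum_congr rfl fun ρ _ => ?_
        rw [sum_sign_smul_prod_comp_perm, sign_blockInsertionPerm hq hm, smul_smul, Units.val_mul,
          ← mul_assoc, Int.units_coe_mul_self, one_mul]
    _ = _ := by
        rw [Finset.sum_const, Finset.card_univ, Fintype.card_perm, Fintype.card_fin, mul_smul,
          natCast_zsmul]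

end BlockInsertion

theorem sum_sign_smul_altProd_cons_altProd {m N n : ℕ} (hm : Even m) (hN : Even N)
    (h : m + N = n) (a : Fin n → A) :
    ∑ τ : Perm (Fin n), (sign τ : ℤ) •
      altProd (Fin.cons (altProd fun i : Fin m => a (τ (Fin.cast h (Fin.castAdd N i))))
        fun j : Fin N => a (τ (Fin.cast h (Fin.natAdd m j))) : Fin (N + 1) → A) =
      (m ! * N ! : ℤ) • altProd a := by
  subst h
  have hsum : ∑ q : Fin (N + 1), ((-1) ^ (q : ℕ) : ℤ) = 1 := by
    rw [Fin.sum_univ_eq_sum_range (fun q => ((-1) ^ q : ℤ)), neg_one_geom_sum,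
      if_neg (by simpa [Nat.even_add_one] using hN)]
  calc _ = ∑ q : Fin (N + 1), ∑ σ : Perm (Fin N),
          ((-1) ^ (q : ℕ) * sign σ : ℤ) • ((m ! : ℤ) * sign σ) • altProd a := by
        simp_rw [Fin.cast_eq_self, altProd_cons, Finset.smul_sum]
        rw [Finset.sum_comm]
        refine Finset.sum_congr rfl fun q _ => ?_
        rw [Finset.sum_comm]
        refine Finset.sum_congr rfl fun σ _ => ?_
        rw [← sum_sign_smul_prod_take_mul_altProd_mul_prod_drop q.is_le hm, Finset.smul_sum]
        exact Finset.sum_congr rfl fun τ _ => smul_comm _ _ _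
    _ = ∑ q : Fin (N + 1), ((m ! * N ! : ℤ) * (-1) ^ (q : ℕ)) • altProd a := by
        refine Finset.sum_congr rfl fun q _ => ?_
        have hterm : ∀ σ : Perm (Fin N), ((-1) ^ (q : ℕ) * sign σ : ℤ) • ((m ! : ℤ) * sign σ) •
            altProd a = ((-1) ^ (q : ℕ) * m ! : ℤ) • altProd a := fun σ => by
          rw [smul_smul]
          congr 1
          linear_combination ((-1) ^ (q : ℕ) * m ! : ℤ) * Int.units_coe_mul_self (sign σ)
        rw [Finset.sum_congr rfl fun σ _ => hterm σ, Finset.sum_const, Finset.card_univ,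
          Fintype.card_perm, Fintype.card_fin, ← natCast_zsmul, smul_smul]
        congr 1
        ring
    _ = _ := by rw [← Finset.sum_smul, ← Finset.mul_sum, hsum, mul_one]

end Alternation

/-- `Δ_{2k+1}[Δ_{2ℓ}] = Δ_{2k+2ℓ}`: the alternating insertion of `Δ_{2ℓ}` into the
first slot of `Δ_{2k+1}`, summed with signs over all permutations of the
`2k+2ℓ` arguments and divided by `(2k)!·(2ℓ)!`, equals `Δ_{2k+2ℓ}`. -/
theorem altProd_odd_even_comp {A : Type*} [Ring A] [Algebra ℚ A]
    (k ℓ : ℕ) (hk : 0 < k) (a : Fin (2 * k + 2 * ℓ) → A) :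
    (((2 * k).factorial * (2 * ℓ).factorial : ℚ)⁻¹) •
      ∑ τ : Equiv.Perm (Fin (2 * k + 2 * ℓ)), (Equiv.Perm.sign τ : ℤ) •
        altProd (fun j : Fin (2 * k + 1) =>
          if (j : ℕ) = 0 then
            altProd (fun i : Fin (2 * ℓ) => a (τ ⟨(i : ℕ), by omega⟩))
          else a (τ ⟨2 * ℓ + (j : ℕ) - 1, by omega⟩))
    = altProd a := by
  have h : 2 * ℓ + 2 * k = 2 * k + 2 * ℓ := add_comm _ _
  have hcons : ∀ τ : Perm (Fin (2 * k + 2 * ℓ)),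
      (fun j : Fin (2 * k + 1) =>
        if (j : ℕ) = 0 then altProd (fun i : Fin (2 * ℓ) => a (τ ⟨(i : ℕ), by omega⟩))
        else a (τ ⟨2 * ℓ + (j : ℕ) - 1, by omega⟩)) =
      Fin.cons (altProd fun i => a (τ (Fin.cast h (Fin.castAdd (2 * k) i))))
        fun j => a (τ (Fin.cast h (Fin.natAdd (2 * ℓ) j))) := by
    intro τ
    funext j
    refine Fin.cases rfl (fun j => ?_) j
    simp only [Fin.val_succ, Nat.add_one_ne_zero, if_false, Fin.cons_succ]
    congr 2
  simp only [hcons]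
  rw [sum_sign_smul_altProd_cons_altProd (even_two_mul ℓ) (even_two_mul k) h,
    ← Int.cast_smul_eq_zsmul ℚ, smul_smul]
  push_cast
  rw [mul_comm ((2 * ℓ)! : ℚ), inv_mul_cancel₀ (by positivity), one_smul]
end

section
/- For any natural number N ≥ 1, if a₁,…,a_N are polynomials of degree at most N, then their N-ary Wronskian determinant W(a₁,…,a_N) (with derivative orders 0 through N−1) again has degree at most N. -/
open Polynomial

private lemma wronskianN_sum_bound {N : ℕ} (k : Fin N → ℕ) (hinj : Function.Injective k)
    (hle : ∀ j, k j ≤ N) : ∑ j, k j ≤ N + ∑ i : Fin N, (i : ℕ) := by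
  calc ∑ j, k j = ∑ m ∈ Finset.image k Finset.univ, m := by
        rw [Finset.sum_image (fun x _ y _ h => hinj h)]
    _ ≤ ∑ m ∈ Finset.range (N + 1), m := by
        apply Finset.sum_le_sum_of_subset
        intro m hm
        obtain ⟨j, _, rfl⟩ := Finset.mem_image.mp hm
        exact Finset.mem_range.mpr (Nat.lt_succ_of_le (hle j))
    _ = N + ∑ m ∈ Finset.range N, m := by rw [Finset.sum_range_succ]; omega
    _ = N + ∑ i : Fin N, (i : ℕ) := by rw [Fin.sum_univ_eq_sum_range (fun i => i)]

private lemma wronskianN_det_mono {K : Type*} [Field K] [CharZero K]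
    {N : ℕ} (k : Fin N → ℕ) (hinj : Function.Injective k) (hle : ∀ j, k j ≤ N) :
    (Matrix.det (Matrix.of fun i j : Fin N =>
      (⇑derivative)^[(i : ℕ)] ((X : K[X]) ^ (k j)))).natDegree ≤ N := by
  rw [Matrix.det_apply']
  apply natDegree_sum_le_of_forall_le
  intro σ _
  refine (natDegree_mul_le).trans ?_
  have hε : (((Equiv.Perm.sign σ : ℤ) : K[X])).natDegree = 0 := natDegree_intCast _
  rw [hε, Nat.zero_add]
  by_cases hc : ∀ i : Fin N, ((σ i : ℕ)) ≤ k i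
  · refine (natDegree_prod_le _ _).trans ?_
    have hterm : ∀ i : Fin N,
        ((Matrix.of fun i j : Fin N => (⇑derivative)^[(i : ℕ)] ((X : K[X]) ^ (k j))) (σ i) i).natDegree
          ≤ k i - (σ i : ℕ) := by
      intro i
      simpa [natDegree_X_pow] using
        natDegree_iterate_derivative ((X : K[X]) ^ (k i)) (σ i : ℕ)
    refine (Finset.sum_le_sum fun i _ => hterm i).trans ?_
    have hsum : (∑ i, (k i - (σ i : ℕ))) + ∑ i, (σ i : ℕ) = ∑ i, k i := by
      rw [← Finset.sum_add_distrib]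
      exact Finset.sum_congr rfl fun i _ => Nat.sub_add_cancel (hc i)
    have hσ : ∑ i : Fin N, ((σ i : ℕ)) = ∑ i : Fin N, (i : ℕ) :=
      Equiv.sum_comp σ (fun i => (i : ℕ))
    have hb := wronskianN_sum_bound k hinj hle
    omega
  · push_neg at hc
    obtain ⟨i, hi⟩ := hc
    rw [Finset.prod_eq_zero (Finset.mem_univ i)]
    · simp
    · simp only [Matrix.of_apply]
      exact iterate_derivative_eq_zero (by simpa [natDegree_X_pow] using hi)

/-- If `a₁,…,a_N` are polynomials of degree at most `N`, then their `N`-ary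
Wronskian determinant (with derivative orders `0,…,N−1`) has degree at most `N`. -/
theorem wronskianN_deg_le {K : Type*} [Field K] [CharZero K]
    (N : ℕ) (hN : 1 ≤ N) (a : Fin N → K[X]) (ha : ∀ j, (a j).natDegree ≤ N) :
    (Matrix.det (Matrix.of fun i j : Fin N =>
      (⇑derivative)^[(i : ℕ)] (a j))).natDegree ≤ N := by
  classical
  set L : K[X] →ₗ[K] (Fin N → K[X]) :=
    LinearMap.pi (fun i : Fin N => (derivative : K[X] →ₗ[K] K[X]) ^ (i : ℕ)) with hLdef
  have hL : ∀ p : K[X], L p = fun i : Fin N => (⇑derivative)^[(i : ℕ)] p := by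
    intro p
    funext i
    simp [hLdef, LinearMap.pi_apply, Module.End.pow_apply]
  set f : MultilinearMap K (fun _ : Fin N => (Fin N → K[X])) K[X] :=
    (Matrix.detRowAlternating (n := Fin N) (R := K[X])).toMultilinearMap.restrictScalars K
    with hfdef
  have hfapp : ∀ v : Fin N → (Fin N → K[X]),
      f v = (Matrix.of fun i j : Fin N => v j i).det := by
    intro v
    rw [← Matrix.det_transpose]
    rfl
  have key : (Matrix.det (Matrix.of fun i j : Fin N =>
      (⇑derivative)^[(i : ℕ)] (a j))) = f (fun j => L (a j)) := by
    rw [hfapp]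
    congr 1
    ext i j
    simp [hL]
  have ha' : ∀ j, L (a j) = ∑ k ∈ Finset.range (N + 1), ((a j).coeff k) • L (X ^ k) := by
    intro j
    conv_lhs => rw [Polynomial.as_sum_range' (a j) (N + 1) (Nat.lt_succ_of_le (ha j))]
    rw [map_sum]
    refine Finset.sum_congr rfl fun k _ => ?_
    rw [← smul_X_eq_monomial, map_smul]
  rw [key]
  have expand : f (fun j => L (a j)) =
      ∑ r ∈ Fintype.piFinset (fun _ : Fin N => Finset.range (N + 1)),
        ((∏ j, (a j).coeff (r j)) • f (fun j => L (X ^ (r j)))) := by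
    simp_rw [ha']
    rw [f.map_sum_finset]
    exact Finset.sum_congr rfl fun r _ => f.map_smul_univ _ _
  rw [expand]
  apply natDegree_sum_le_of_forall_le
  intro r hr
  refine (natDegree_smul_le _ _).trans ?_
  have hrle : ∀ j, r j ≤ N := by
    intro j
    have := Fintype.mem_piFinset.mp hr j
    exact Nat.lt_succ_iff.mp (Finset.mem_range.mp this)
  by_cases hinj : Function.Injective r
  · have : f (fun j => L (X ^ (r j))) = (Matrix.of fun i j : Fin N =>
        (⇑derivative)^[(i : ℕ)] ((X : K[X]) ^ (r j))).det := by
      rw [hfapp]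
      congr 1
      ext i j
      simp [hL]
    rw [this]
    exact wronskianN_det_mono r hinj hrle
  · unfold Function.Injective at hinj
    push_neg at hinj
    obtain ⟨j1, j2, heq, hne⟩ := hinj
    have hzero : f (fun j => L (X ^ (r j))) = 0 := by
      exact (Matrix.detRowAlternating (n := Fin N) (R := K[X])).map_eq_zero_of_eq
        _ (by rw [heq]) hne
    simp [hzero]
end

section
/- Fix N ≥ 1 and 0 ≤ k ≤ N. The Wronskian determinant of the N monomials 1, x, x²/2!, …, x^{k−1}/(k−1)!, x^{k+1}/(k+1)!, …, x^N/N! (i.e. the basis monomials x^j/j! for 0 ≤ j ≤ N with x^k/k! omitted), taken in increasing order of degree with derivative orders 0 through N−1, equals x^{N−k}/(N−k)!. -/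
open Polynomial

/-- The divided-power monomial `x^m/m!` in `ℚ[x]`. -/
noncomputable def dpMonomial (m : ℕ) : ℚ[X] := C (1 / m.factorial : ℚ) * X ^ m

open Finset in
lemma dp_zero : dpMonomial 0 = 1 := by simp [dpMonomial]

lemma dp_iter (i m : ℕ) :
    (⇑derivative)^[i] (dpMonomial m) = if i ≤ m then dpMonomial (m - i) else 0 := by
  unfold dpMonomial
  rw [iterate_derivative_C_mul, iterate_derivative_X_pow_eq_C_mul, ← mul_assoc, ← C_mul]
  split_ifs with h
  · congr 2
    have h1 : ((m - i).factorial : ℚ) * (m.descFactorial i : ℚ) = m.factorial := by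
      exact_mod_cast congrArg (Nat.cast : ℕ → ℚ) (Nat.factorial_mul_descFactorial h)
    have h2 : (m.factorial : ℚ) ≠ 0 := Nat.cast_ne_zero.2 m.factorial_ne_zero
    have h3 : ((m - i).factorial : ℚ) ≠ 0 := Nat.cast_ne_zero.2 (Nat.factorial_ne_zero _)
    field_simp
    linarith [h1]
  · rw [Nat.descFactorial_eq_zero_iff_lt.2 (lt_of_not_ge h)]
    simp

lemma dp_derivative (m : ℕ) : derivative (dpMonomial (m + 1)) = dpMonomial m := by
  have h := dp_iter 1 (m + 1)
  rw [Function.iterate_one, if_pos (by omega : 1 ≤ m + 1)] at h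
  simpa using h

lemma dp_eval_zero (m : ℕ) : eval 0 (dpMonomial m) = if m = 0 then 1 else 0 := by
  cases m with
  | zero => simp [dpMonomial]
  | succ m => simp [dpMonomial, zero_pow]

lemma derivative_finset_prod {ι : Type*} [DecidableEq ι] (s : Finset ι) (f : ι → ℚ[X]) :
    derivative (∏ i ∈ s, f i) = ∑ i ∈ s, (∏ j ∈ s.erase i, f j) * derivative (f i) := by
  classical
  induction s using Finset.induction_on with
  | empty => simp
  | @insert a s ha ih =>
    rw [Finset.prod_insert ha, derivative_mul, ih, Finset.sum_insert ha,
      Finset.erase_insert ha]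
    rw [Finset.mul_sum]
    congr 1
    · ring
    · refine Finset.sum_congr rfl fun i hi => ?_
      rw [Finset.erase_insert_of_ne (by rintro rfl; exact ha hi)]
      rw [Finset.prod_insert (fun h => ha (Finset.mem_of_mem_erase h))]
      ring

lemma derivative_det {n : ℕ} (M : Matrix (Fin n) (Fin n) ℚ[X]) :
    derivative M.det = ∑ r, (M.updateRow r fun j => derivative (M r j)).det := by
  simp only [Matrix.det_apply']
  rw [map_sum]
  conv_rhs => rw [Finset.sum_comm]
  refine Finset.sum_congr rfl fun σ _ => ?_
  rw [derivative_mul, Polynomial.derivative_intCast, zero_mul, zero_add,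
    derivative_finset_prod, Finset.mul_sum]
  conv_rhs => rw [← Equiv.sum_comp σ]
  refine Finset.sum_congr rfl fun i _ => ?_
  congr 1
  have key : ∀ j : Fin n,
      M.updateRow (σ i) (fun l => derivative (M (σ i) l)) (σ j) j
        = if j = i then derivative (M (σ i) j) else M (σ j) j := by
    intro j
    rcases eq_or_ne j i with rfl | hj
    · simp [Matrix.updateRow_self]
    · rw [Matrix.updateRow_ne (fun h => hj (σ.injective h)), if_neg hj]
  rw [Finset.prod_congr rfl fun j _ => key j,
    ← Finset.mul_prod_erase Finset.univ _ (Finset.mem_univ i), if_pos rfl,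
    Finset.prod_congr rfl fun j hj => if_neg (Finset.mem_erase.1 hj).1, mul_comm]

lemma det_last_row_single {n : ℕ} (M : Matrix (Fin (n + 1)) (Fin (n + 1)) ℚ[X])
    (h : ∀ j, M (Fin.last n) j = if j = Fin.last n then 1 else 0) :
    M.det = (M.submatrix Fin.castSucc Fin.castSucc).det := by
  rw [Matrix.det_succ_row M (Fin.last n)]
  rw [Finset.sum_eq_single (Fin.last n)]
  · rw [h, if_pos rfl, Fin.succAbove_last, mul_one]
    rw [Fin.val_last, (Even.neg_one_pow ⟨n, rfl⟩ : ((-1 : ℚ[X]) ^ (n + n)) = 1), one_mul]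
  · intro j _ hj
    rw [h, if_neg hj, mul_zero, zero_mul]
  · simp

lemma wronskian_aux (n : ℕ) : ∀ k : ℕ, k ≤ n →
    Matrix.det (Matrix.of fun i j : Fin n =>
        (⇑derivative)^[(i : ℕ)]
          (dpMonomial (if (j : ℕ) < k then (j : ℕ) else (j : ℕ) + 1)))
      = dpMonomial (n - k) := by
  induction n with
  | zero =>
    intro k hk
    interval_cases k
    simp [Matrix.det_fin_zero, dp_zero]
  | succ n ih =>
    intro k hk
    rcases eq_or_lt_of_le hk with rfl | hk'
    · -- k = n + 1 : upper triangular
      have ht : ∀ i j : Fin (n + 1), (j : ℕ) < (i : ℕ) →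
          (Matrix.of fun i j : Fin (n + 1) =>
            (⇑derivative)^[(i : ℕ)]
              (dpMonomial (if (j : ℕ) < n + 1 then (j : ℕ) else (j : ℕ) + 1))) i j = 0 := by
        intro i j hij
        simp only [Matrix.of_apply]
        rw [if_pos j.is_lt, dp_iter, if_neg (by omega)]
      have hdiag : ∀ i : Fin (n + 1),
          (Matrix.of fun i j : Fin (n + 1) =>
            (⇑derivative)^[(i : ℕ)]
              (dpMonomial (if (j : ℕ) < n + 1 then (j : ℕ) else (j : ℕ) + 1))) i i = 1 := by
        intro i
        simp only [Matrix.of_apply]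
        rw [if_pos i.is_lt, dp_iter, if_pos le_rfl, Nat.sub_self, dp_zero]
      rw [Matrix.det_of_upperTriangular (fun i j hij => ht i j hij),
        Finset.prod_congr rfl (fun i _ => hdiag i), Finset.prod_const_one,
        Nat.sub_self, dp_zero]
    · have hk'' : k ≤ n := Nat.lt_succ_iff.mp hk'
      set W : Matrix (Fin (n + 1)) (Fin (n + 1)) ℚ[X] :=
        Matrix.of fun i j : Fin (n + 1) =>
          (⇑derivative)^[(i : ℕ)]
            (dpMonomial (if (j : ℕ) < k then (j : ℕ) else (j : ℕ) + 1)) with hW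
      have hder : derivative W.det = dpMonomial (n - k) := by
        rw [derivative_det]
        rw [Finset.sum_eq_single (Fin.last n)]
        · rw [det_last_row_single]
          · rw [← ih k hk'']
            congr 1
            ext i j
            rw [Matrix.submatrix_apply, Matrix.updateRow_ne (Fin.castSucc_lt_last i).ne]
            simp [hW, Fin.coe_castSucc]
          · intro j
            rw [Matrix.updateRow_self]
            simp only [hW, Matrix.of_apply]
            rw [← Function.iterate_succ_apply' derivative, Fin.val_last, dp_iter]
            rcases eq_or_ne j (Fin.last n) with rfl | hj
            · rw [if_pos rfl, Fin.val_last, if_neg (show ¬ n < k by omega),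
                if_pos (le_refl (n + 1)), Nat.sub_self, dp_zero]
            · have hjn : (j : ℕ) < n := Fin.val_lt_last hj
              rw [if_neg hj]
              split_ifs with h1 h2 <;> first | rfl | omega
        · intro r _ hr
          have hrn : (r : ℕ) < n := Fin.val_lt_last hr
          refine Matrix.det_zero_of_row_eq (i := r) (j := ⟨(r : ℕ) + 1, by omega⟩)
            (fun h => by simpa using congrArg Fin.val h) ?_
          rw [Matrix.updateRow_self, Matrix.updateRow_ne
            (fun h => by simpa using congrArg Fin.val h.symm)]
          funext j
          simp only [hW, Matrix.of_apply]
          exact (Function.iterate_succ_apply' derivative (r : ℕ) _).symm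
        · simp
      have heval : eval 0 W.det = 0 := by
        rw [← Polynomial.coe_evalRingHom, RingHom.map_det, RingHom.mapMatrix_apply]
        refine Matrix.det_eq_zero_of_column_eq_zero (Fin.last n) fun i => ?_
        have hi := i.is_lt
        rw [Matrix.map_apply]
        have hWi : W i (Fin.last n) = dpMonomial (n + 1 - (i : ℕ)) := by
          simp only [hW, Matrix.of_apply, Fin.val_last]
          rw [if_neg (by omega : ¬ n < k), dp_iter, if_pos (by omega : (i : ℕ) ≤ n + 1)]
        rw [hWi, coe_evalRingHom, dp_eval_zero, if_neg (by omega)]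
      have hd : derivative (W.det - dpMonomial (n + 1 - k)) = 0 := by
        rw [derivative_sub, hder, show n + 1 - k = (n - k) + 1 by omega, dp_derivative,
          sub_self]
      have h0 : eval 0 (W.det - dpMonomial (n + 1 - k)) = 0 := by
        rw [eval_sub, heval, dp_eval_zero, if_neg (by omega), sub_zero]
      have hC := Polynomial.eq_C_of_natDegree_eq_zero
        (Polynomial.natDegree_eq_zero_of_derivative_eq_zero hd)
      rw [hC, eval_C] at h0
      have : W.det - dpMonomial (n + 1 - k) = 0 := by rw [hC, h0, map_zero]
      exact sub_eq_zero.mp this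

/-- The Wronskian of the `N` divided-power monomials `x^j/j!`, `0 ≤ j ≤ N`,
with `x^k/k!` omitted and taken in increasing order of degree, equals
`x^{N−k}/(N−k)!`. -/
theorem wronskian_omit_monomial (N k : ℕ) (hN : 1 ≤ N) (hk : k ≤ N) :
    Matrix.det (Matrix.of fun i j : Fin N =>
        (⇑derivative)^[(i : ℕ)]
          (dpMonomial (if (j : ℕ) < k then (j : ℕ) else (j : ℕ) + 1)))
      = dpMonomial (N - k) :=
  wronskian_aux N k hk
end

section
/- For m ≥ 1, let W_m denote the m×m Wronskian determinant of the monomials x, x²/2!, …, x^m/m! (with derivative orders 0 through m−1). Then W_m satisfies the recurrence W_m = Σ_{ℓ=1}^{m−1} (−1)^{ℓ+1}·(x^ℓ/ℓ!)·W_{m−ℓ} − (−1)^m·x^m/m!. -/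
open Polynomial

/-- The `m×m` Wronskian determinant of the monomials `x, x²/2!, …, x^m/m!`. -/
noncomputable def Wm (m : ℕ) : ℚ[X] :=
  Matrix.det (Matrix.of fun i j : Fin m =>
    (⇑derivative)^[(i : ℕ)] (dpMonomial ((j : ℕ) + 1)))

/-! Multiplying row `i` of the Wronskian matrix by `x^i` and dividing column `j` by `x^(j+1)`
leaves the constant matrix `((j+1).descFactorial i / (j+1)!)`. Transposed, its unscaled part is
the matrix of the monic polynomials `descPochhammer j` evaluated at `1, …, m`, so its determinant
is a Vandermonde determinant; this gives the closed form `W_m = x^m/m!`. Since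
`x^ℓ/ℓ! · x^(m-ℓ)/(m-ℓ)! = (m choose ℓ) · x^m/m!`, the recurrence then reduces to the vanishing
of the alternating sum of binomial coefficients. -/

theorem det_descFactorial_succ_mul_factorial {R : Type*} [CommRing R] [IsDomain R] (m : ℕ) :
    (Matrix.of fun i j : Fin m => (((j : ℕ) + 1).descFactorial i : R)).det * m.factorial
      = ∏ j : Fin m, (((j : ℕ) + 1).factorial : R) := by
  have hvdm : (Matrix.of fun i j : Fin m => (((j : ℕ) + 1).descFactorial i : R)).det
      = (Matrix.vandermonde fun i : Fin m => ((i : ℕ) : R) + 1).det := by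
    rw [← Matrix.det_transpose, Matrix.det_eval_matrixOfPolynomials_eq_det_vandermonde _
      (fun j => descPochhammer R j) (fun j => descPochhammer_natDegree R j)
      (fun j => monic_descPochhammer R j)]
    congr 1
    ext i j
    simp [← descPochhammer_eval_eq_descFactorial]
  rw [hvdm, Matrix.det_vandermonde_add,
    Fin.prod_univ_eq_prod_range (fun j => ((j + 1).factorial : R)), ← Nat.cast_prod,
    Nat.prod_range_factorial_succ]
  cases m with
  | zero => simp
  | succ n =>
    rw [Matrix.det_vandermonde_id_eq_superFactorial, Nat.superFactorial_succ]
    push_cast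
    ring

theorem det_descFactorial_div_factorial {K : Type*} [Field K] [CharZero K] (m : ℕ) :
    (Matrix.of fun i j : Fin m =>
      (((j : ℕ) + 1).descFactorial i : K) / ((j : ℕ) + 1).factorial).det = 1 / m.factorial := by
  have hcol : (Matrix.of fun i j : Fin m =>
      (((j : ℕ) + 1).descFactorial i : K) / ((j : ℕ) + 1).factorial)
      = Matrix.of fun i j : Fin m => (((j : ℕ) + 1).factorial : K)⁻¹ *
          Matrix.of (fun i j : Fin m => (((j : ℕ) + 1).descFactorial i : K)) i j := by
    ext i j
    simp [div_eq_inv_mul]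
  rw [hcol, Matrix.det_mul_row, Finset.prod_inv_distrib,
    eq_div_iff (Nat.cast_ne_zero.mpr m.factorial_ne_zero), mul_assoc,
    det_descFactorial_succ_mul_factorial, inv_mul_cancel₀]
  exact Finset.prod_ne_zero_iff.mpr fun j _ => Nat.cast_ne_zero.mpr (Nat.factorial_ne_zero _)

theorem sum_Icc_neg_one_pow_succ_mul_choose {R : Type*} [CommRing R] {m : ℕ} (hm : 1 ≤ m) :
    ∑ l ∈ Finset.Icc 1 (m - 1), (-1 : R) ^ (l + 1) * (m.choose l : R) = 1 + (-1) ^ m := by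
  obtain ⟨k, rfl⟩ := Nat.exists_eq_add_of_le' hm
  have h := congrArg (Int.cast : ℤ → R) (Int.alternating_sum_range_choose_of_ne k.succ_ne_zero)
  push_cast at h
  rw [Finset.sum_range_succ, Finset.sum_range_succ'] at h
  simp only [Nat.choose_zero_right, Nat.choose_self, Nat.cast_one, mul_one] at h
  rw [Nat.add_sub_cancel, ← Finset.Ico_add_one_right_eq_Icc, Finset.sum_Ico_eq_sum_range,
    Nat.add_sub_cancel]
  have hshift : ∑ x ∈ Finset.range k, (-1 : R) ^ (1 + x + 1) * ((k + 1).choose (1 + x) : R)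
      = -∑ x ∈ Finset.range k, (-1 : R) ^ (x + 1) * ((k + 1).choose (x + 1) : R) := by
    rw [← Finset.sum_neg_distrib]
    refine Finset.sum_congr rfl fun x _ => ?_
    rw [add_comm 1 x]
    ring
  rw [hshift]
  linear_combination -h

theorem X_pow_mul_iterate_derivative_dpMonomial (i n : ℕ) :
    X ^ i * derivative^[i] (dpMonomial n) = C ((n.descFactorial i : ℚ) / n.factorial) * X ^ n := by
  rw [dpMonomial, iterate_derivative_C_mul, iterate_derivative_X_pow_eq_C_mul]
  rcases le_or_gt i n with h | h
  · calc X ^ i * (C (1 / n.factorial : ℚ) * (C (n.descFactorial i : ℚ) * X ^ (n - i)))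
        = C ((n.descFactorial i : ℚ) / n.factorial) * (X ^ i * X ^ (n - i)) := by
          rw [one_div, div_eq_mul_inv, C_mul]; ring
      _ = _ := by rw [← pow_add, Nat.add_sub_cancel' h]
  · simp [Nat.descFactorial_of_lt h]

theorem dpMonomial_mul (a b : ℕ) :
    dpMonomial a * dpMonomial b = ((a + b).choose a : ℚ[X]) * dpMonomial (a + b) := by
  have h := Nat.choose_mul_factorial_mul_factorial (Nat.le_add_right a b)
  rw [Nat.add_sub_cancel_left] at h
  calc dpMonomial a * dpMonomial b
        = C (1 / a.factorial * (1 / b.factorial) : ℚ) * X ^ (a + b) := by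
        rw [dpMonomial, dpMonomial, C_mul, pow_add]; ring
    _ = C ((a + b).choose a * (1 / (a + b).factorial) : ℚ) * X ^ (a + b) := by
        congr 2
        field_simp
        rw [← h]; push_cast; ring
    _ = _ := by rw [C_mul, C_eq_natCast, dpMonomial, mul_assoc]

theorem Wm_eq_dpMonomial (m : ℕ) : Wm m = dpMonomial m := by
  have hscale : (∏ i : Fin m, (X : ℚ[X]) ^ (i : ℕ)) * Wm m
      = (∏ j : Fin m, (X : ℚ[X]) ^ ((j : ℕ) + 1)) * C (1 / m.factorial : ℚ) := by
    rw [Wm, ← Matrix.det_mul_column, ← det_descFactorial_div_factorial, RingHom.map_det,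
      ← Matrix.det_mul_row]
    congr 1
    refine Matrix.ext fun i j => ?_
    simp only [Matrix.of_apply, RingHom.mapMatrix_apply, Matrix.map_apply]
    rw [X_pow_mul_iterate_derivative_dpMonomial, mul_comm]
  simp only [pow_succ, Finset.prod_mul_distrib, Finset.prod_const, Finset.card_univ,
    Fintype.card_fin, mul_assoc] at hscale
  rw [mul_comm (X ^ m)] at hscale
  rw [dpMonomial]
  exact mul_left_cancel₀ (Finset.prod_ne_zero_iff.mpr fun i _ => pow_ne_zero _ X_ne_zero) hscale

/-- The recurrence
`W_m = Σ_{ℓ=1}^{m−1} (−1)^{ℓ+1}·(x^ℓ/ℓ!)·W_{m−ℓ} − (−1)^m·x^m/m!`. -/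
theorem Wm_recurrence (m : ℕ) (hm : 1 ≤ m) :
    Wm m = (∑ l ∈ Finset.Icc 1 (m - 1), (-1) ^ (l + 1) * dpMonomial l * Wm (m - l))
      - (-1) ^ m * dpMonomial m := by
  have hterm : ∀ l ∈ Finset.Icc 1 (m - 1), (-1 : ℚ[X]) ^ (l + 1) * dpMonomial l * Wm (m - l)
      = (-1) ^ (l + 1) * (m.choose l : ℚ[X]) * dpMonomial m := by
    intro l hl
    have hlm : l + (m - l) = m := Nat.add_sub_cancel' (by grind)
    rw [Wm_eq_dpMonomial, mul_assoc, dpMonomial_mul, hlm, mul_assoc]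
  rw [Finset.sum_congr rfl hterm, ← Finset.sum_mul, sum_Icc_neg_one_pow_succ_mul_choose hm,
    Wm_eq_dpMonomial]
  ring
end

section
/- For integer exponents n₁,…,n_N ≥ N−1, the Wronskian determinant of the monomials x^{n₁},…,x^{n_N} in the polynomial ring equals ∏_{1≤i<j≤N}(n_j − n_i) · x^{n₁+…+n_N − N(N−1)/2}. -/
open Polynomial

/-- For integer exponents `n₁,…,n_N ≥ N−1`, the Wronskian determinant of the
monomials `x^{n₁},…,x^{n_N}` in `ℚ[x]` equals the Vandermonde determinant of the
exponents times `x^{n₁+…+n_N − N(N−1)/2}`. -/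
theorem wronskian_monomials (N : ℕ) (n : Fin N → ℕ) (hn : ∀ i, N - 1 ≤ n i) :
    Matrix.det (Matrix.of fun i j : Fin N =>
        (⇑derivative)^[(i : ℕ)] ((X : ℚ[X]) ^ n j))
      = C (∏ i : Fin N, ∏ j ∈ Finset.Ioi i, ((n j : ℚ) - (n i : ℚ))) *
          X ^ ((∑ i, n i) - N * (N - 1) / 2) := by
  -- Step 1: rewrite each entry
  have entry : ∀ i j : Fin N, (⇑derivative)^[(i : ℕ)] ((X : ℚ[X]) ^ n j)
      = X ^ (N - 1 - (i : ℕ)) * (X ^ (n j - (N - 1)) *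
          C (((n j).descFactorial (i : ℕ) : ℚ))) := by
    intro i j
    rw [iterate_derivative_X_pow_eq_C_mul, ← mul_assoc, ← pow_add,
      show (N - 1 - (i : ℕ)) + (n j - (N - 1)) = n j - (i : ℕ) by
        have := i.isLt; have := hn j; omega, mul_comm]
  have hM : (Matrix.of fun i j : Fin N =>
        (⇑derivative)^[(i : ℕ)] ((X : ℚ[X]) ^ n j))
      = Matrix.of fun i j : Fin N => (X : ℚ[X]) ^ (N - 1 - (i : ℕ)) *
          (Matrix.of fun i j : Fin N => (X : ℚ[X]) ^ (n j - (N - 1)) *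
            (Matrix.of fun i j : Fin N =>
              C (((n j).descFactorial (i : ℕ) : ℚ))) i j) i j := by
    exact Matrix.ext fun i j => entry i j
  rw [hM, Matrix.det_mul_column, Matrix.det_mul_row]
  -- Step 2: the constant determinant is the Vandermonde determinant
  have hC : (Matrix.of fun i j : Fin N => C (((n j).descFactorial (i : ℕ) : ℚ))).det
      = C ((Matrix.of fun i j : Fin N => (((n j).descFactorial (i : ℕ) : ℚ))).det) := by
    rw [RingHom.map_det]
    rfl
  have hV : (Matrix.of fun i j : Fin N => (((n j).descFactorial (i : ℕ) : ℚ))).det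
      = ∏ i : Fin N, ∏ j ∈ Finset.Ioi i, ((n j : ℚ) - (n i : ℚ)) := by
    have h := Matrix.det_eval_matrixOfPolynomials_eq_det_vandermonde
      (fun j : Fin N => ((n j : ℚ))) (fun i : Fin N => descPochhammer ℚ (i : ℕ))
      (fun i => descPochhammer_natDegree (R := ℚ) (i : ℕ)) (fun i => monic_descPochhammer _ _)
    rw [Matrix.det_vandermonde] at h
    rw [← Matrix.det_transpose, h]
    congr 1
    ext i j
    simp [Matrix.transpose_apply, descPochhammer_eval_eq_descFactorial]
  rw [hC, hV]
  -- Step 3: combine the powers of X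
  rw [Finset.prod_pow_eq_pow_sum, Finset.prod_pow_eq_pow_sum]
  have e1 : (∑ i : Fin N, (N - 1 - (i : ℕ))) * 2 = N * (N - 1) := by
    rw [Fin.sum_univ_eq_sum_range, Finset.sum_range_reflect (fun i => i) N,
      Finset.sum_range_id_mul_two]
  have e2 : ∑ j : Fin N, (n j - (N - 1)) = (∑ j, n j) - N * (N - 1) := by
    have : ∑ j : Fin N, (n j - (N - 1)) + ∑ _j : Fin N, (N - 1)
        = ∑ j : Fin N, n j := by
      rw [← Finset.sum_add_distrib]
      exact Finset.sum_congr rfl fun j _ => by have := hn j; omega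
    simp only [Finset.sum_const, Finset.card_univ, Fintype.card_fin, smul_eq_mul] at this
    omega
  have hsum : N * (N - 1) ≤ ∑ j, n j := by
    calc N * (N - 1) = ∑ _j : Fin N, (N - 1) := by
          simp [Finset.sum_const, mul_comm]
      _ ≤ ∑ j, n j := Finset.sum_le_sum fun j _ => hn j
  rw [e2,
    show (∑ i, n i) - N * (N - 1) / 2
      = (∑ i : Fin N, (N - 1 - (i : ℕ))) + ((∑ j, n j) - N * (N - 1)) by omega, pow_add]
  ring
end

section
/- For N = 3, the alternating sum over τ ∈ S₅ of sgn(τ)·W₃(W₃(a_{τ(1)}, a_{τ(2)}, a_{τ(3)}), a_{τ(4)}, a_{τ(5)}) vanishes for arbitrary polynomials a₁,…,a₅, where W₃ is the 3×3 Wronskian determinant. -/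
open Polynomial

/-- The 3×3 Wronskian determinant of three polynomials. -/
noncomputable def w3 (f g h : ℚ[X]) : ℚ[X] :=
  Matrix.det !![f, g, h;
    derivative f, derivative g, derivative h;
    derivative (derivative f), derivative (derivative g), derivative (derivative h)]

namespace W3Aux

open Equiv

lemma sum_perm_succ {M : Type*} [AddCommMonoid M] {n : ℕ} (f : Perm (Fin (n+1)) → M) :
    ∑ σ : Perm (Fin (n+1)), f σ =
      ∑ i : Fin (n+1), ∑ σ : Perm (Fin n), f (Equiv.Perm.decomposeFin.symm (i, σ)) := by
  rw [← Equiv.sum_comp Equiv.Perm.decomposeFin.symm f, Fintype.sum_prod_type]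

lemma f51 : (1 : Fin 5) = Fin.succ 0 := rfl
lemma f52 : (2 : Fin 5) = Fin.succ 1 := rfl
lemma f53 : (3 : Fin 5) = Fin.succ 2 := rfl
lemma f54 : (4 : Fin 5) = Fin.succ 3 := rfl
lemma f41 : (1 : Fin 4) = Fin.succ 0 := rfl
lemma f42 : (2 : Fin 4) = Fin.succ 1 := rfl
lemma f43 : (3 : Fin 4) = Fin.succ 2 := rfl
lemma f31 : (1 : Fin 3) = Fin.succ 0 := rfl
lemma f32 : (2 : Fin 3) = Fin.succ 1 := rfl
lemma f21 : (1 : Fin 2) = Fin.succ 0 := rfl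
lemma s40 : Fin.succ (0:Fin 4) = 1 := rfl
lemma s41 : Fin.succ (1:Fin 4) = 2 := rfl
lemma s42 : Fin.succ (2:Fin 4) = 3 := rfl
lemma s43 : Fin.succ (3:Fin 4) = 4 := rfl
lemma s30 : Fin.succ (0:Fin 3) = 1 := rfl
lemma s31 : Fin.succ (1:Fin 3) = 2 := rfl
lemma s32 : Fin.succ (2:Fin 3) = 3 := rfl
lemma s20 : Fin.succ (0:Fin 2) = 1 := rfl
lemma s21 : Fin.succ (1:Fin 2) = 2 := rfl
lemma s10 : Fin.succ (0:Fin 1) = 1 := rfl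
lemma d0 : (default : Fin 1) = 0 := rfl
lemma d1 : (default : Perm (Fin 1)) 0 = 0 := rfl
lemma d2 : Equiv.Perm.sign (default : Perm (Fin 1)) = 1 := rfl
lemma d3 : Equiv.Perm.sign (default : Perm (Fin 0)) = 1 := rfl



lemma rel_012_1 (f g h u v : ℚ[X]) :
    w3 (w3 f g h) v u = -w3 (w3 f g h) u v := by
  simp only [w3, Matrix.det_fin_three, Fin.isValue, Matrix.of_apply, Matrix.cons_val',
    Matrix.cons_val_zero, Matrix.empty_val', Matrix.cons_val_fin_one, Matrix.cons_val_one,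
    Matrix.head_cons, Matrix.cons_val_two, Nat.succ_eq_add_one, Nat.reduceAdd,
    Matrix.tail_cons, Matrix.head_fin_const,
    derivative_add, derivative_sub, derivative_mul, derivative_neg]
  ring


lemma rel_021_0 (f g h u v : ℚ[X]) :
    w3 (w3 f h g) u v = -w3 (w3 f g h) u v := by
  simp only [w3, Matrix.det_fin_three, Fin.isValue, Matrix.of_apply, Matrix.cons_val',
    Matrix.cons_val_zero, Matrix.empty_val', Matrix.cons_val_fin_one, Matrix.cons_val_one,
    Matrix.head_cons, Matrix.cons_val_two, Nat.succ_eq_add_one, Nat.reduceAdd,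
    Matrix.tail_cons, Matrix.head_fin_const,
    derivative_add, derivative_sub, derivative_mul, derivative_neg]
  ring


lemma rel_021_1 (f g h u v : ℚ[X]) :
    w3 (w3 f h g) v u = w3 (w3 f g h) u v := by
  simp only [w3, Matrix.det_fin_three, Fin.isValue, Matrix.of_apply, Matrix.cons_val',
    Matrix.cons_val_zero, Matrix.empty_val', Matrix.cons_val_fin_one, Matrix.cons_val_one,
    Matrix.head_cons, Matrix.cons_val_two, Nat.succ_eq_add_one, Nat.reduceAdd,
    Matrix.tail_cons, Matrix.head_fin_const,
    derivative_add, derivative_sub, derivative_mul, derivative_neg]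
  ring


lemma rel_102_0 (f g h u v : ℚ[X]) :
    w3 (w3 g f h) u v = -w3 (w3 f g h) u v := by
  simp only [w3, Matrix.det_fin_three, Fin.isValue, Matrix.of_apply, Matrix.cons_val',
    Matrix.cons_val_zero, Matrix.empty_val', Matrix.cons_val_fin_one, Matrix.cons_val_one,
    Matrix.head_cons, Matrix.cons_val_two, Nat.succ_eq_add_one, Nat.reduceAdd,
    Matrix.tail_cons, Matrix.head_fin_const,
    derivative_add, derivative_sub, derivative_mul, derivative_neg]
  ring


lemma rel_102_1 (f g h u v : ℚ[X]) :
    w3 (w3 g f h) v u = w3 (w3 f g h) u v := by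
  simp only [w3, Matrix.det_fin_three, Fin.isValue, Matrix.of_apply, Matrix.cons_val',
    Matrix.cons_val_zero, Matrix.empty_val', Matrix.cons_val_fin_one, Matrix.cons_val_one,
    Matrix.head_cons, Matrix.cons_val_two, Nat.succ_eq_add_one, Nat.reduceAdd,
    Matrix.tail_cons, Matrix.head_fin_const,
    derivative_add, derivative_sub, derivative_mul, derivative_neg]
  ring


lemma rel_120_0 (f g h u v : ℚ[X]) :
    w3 (w3 g h f) u v = w3 (w3 f g h) u v := by
  simp only [w3, Matrix.det_fin_three, Fin.isValue, Matrix.of_apply, Matrix.cons_val',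
    Matrix.cons_val_zero, Matrix.empty_val', Matrix.cons_val_fin_one, Matrix.cons_val_one,
    Matrix.head_cons, Matrix.cons_val_two, Nat.succ_eq_add_one, Nat.reduceAdd,
    Matrix.tail_cons, Matrix.head_fin_const,
    derivative_add, derivative_sub, derivative_mul, derivative_neg]
  ring


lemma rel_120_1 (f g h u v : ℚ[X]) :
    w3 (w3 g h f) v u = -w3 (w3 f g h) u v := by
  simp only [w3, Matrix.det_fin_three, Fin.isValue, Matrix.of_apply, Matrix.cons_val',
    Matrix.cons_val_zero, Matrix.empty_val', Matrix.cons_val_fin_one, Matrix.cons_val_one,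
    Matrix.head_cons, Matrix.cons_val_two, Nat.succ_eq_add_one, Nat.reduceAdd,
    Matrix.tail_cons, Matrix.head_fin_const,
    derivative_add, derivative_sub, derivative_mul, derivative_neg]
  ring


lemma rel_201_0 (f g h u v : ℚ[X]) :
    w3 (w3 h f g) u v = w3 (w3 f g h) u v := by
  simp only [w3, Matrix.det_fin_three, Fin.isValue, Matrix.of_apply, Matrix.cons_val',
    Matrix.cons_val_zero, Matrix.empty_val', Matrix.cons_val_fin_one, Matrix.cons_val_one,
    Matrix.head_cons, Matrix.cons_val_two, Nat.succ_eq_add_one, Nat.reduceAdd,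
    Matrix.tail_cons, Matrix.head_fin_const,
    derivative_add, derivative_sub, derivative_mul, derivative_neg]
  ring


lemma rel_201_1 (f g h u v : ℚ[X]) :
    w3 (w3 h f g) v u = -w3 (w3 f g h) u v := by
  simp only [w3, Matrix.det_fin_three, Fin.isValue, Matrix.of_apply, Matrix.cons_val',
    Matrix.cons_val_zero, Matrix.empty_val', Matrix.cons_val_fin_one, Matrix.cons_val_one,
    Matrix.head_cons, Matrix.cons_val_two, Nat.succ_eq_add_one, Nat.reduceAdd,
    Matrix.tail_cons, Matrix.head_fin_const,
    derivative_add, derivative_sub, derivative_mul, derivative_neg]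
  ring


lemma rel_210_0 (f g h u v : ℚ[X]) :
    w3 (w3 h g f) u v = -w3 (w3 f g h) u v := by
  simp only [w3, Matrix.det_fin_three, Fin.isValue, Matrix.of_apply, Matrix.cons_val',
    Matrix.cons_val_zero, Matrix.empty_val', Matrix.cons_val_fin_one, Matrix.cons_val_one,
    Matrix.head_cons, Matrix.cons_val_two, Nat.succ_eq_add_one, Nat.reduceAdd,
    Matrix.tail_cons, Matrix.head_fin_const,
    derivative_add, derivative_sub, derivative_mul, derivative_neg]
  ring


lemma rel_210_1 (f g h u v : ℚ[X]) :
    w3 (w3 h g f) v u = w3 (w3 f g h) u v := by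
  simp only [w3, Matrix.det_fin_three, Fin.isValue, Matrix.of_apply, Matrix.cons_val',
    Matrix.cons_val_zero, Matrix.empty_val', Matrix.cons_val_fin_one, Matrix.cons_val_one,
    Matrix.head_cons, Matrix.cons_val_two, Nat.succ_eq_add_one, Nat.reduceAdd,
    Matrix.tail_cons, Matrix.head_fin_const,
    derivative_add, derivative_sub, derivative_mul, derivative_neg]
  ring


set_option maxHeartbeats 2000000 in
lemma key (f g h u v : ℚ[X]) :
    w3 (w3 f g h) u v
      - w3 (w3 f g u) h v
      + w3 (w3 f g v) h u
      + w3 (w3 f h u) g v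
      - w3 (w3 f h v) g u
      + w3 (w3 f u v) g h
      - w3 (w3 g h u) f v
      + w3 (w3 g h v) f u
      - w3 (w3 g u v) f h
      + w3 (w3 h u v) f g = 0 := by
  simp only [w3, Matrix.det_fin_three, Fin.isValue, Matrix.of_apply, Matrix.cons_val',
    Matrix.cons_val_zero, Matrix.empty_val', Matrix.cons_val_fin_one, Matrix.cons_val_one,
    Matrix.head_cons, Matrix.cons_val_two, Nat.succ_eq_add_one, Nat.reduceAdd,
    Matrix.tail_cons, Matrix.head_fin_const,
    derivative_add, derivative_sub, derivative_mul, derivative_neg]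
  ring


end W3Aux

set_option maxHeartbeats 2000000 in
/-- For `N = 3`, the alternating sum over `S₅` of
`sgn(τ)·W₃(W₃(a_{τ(1)}, a_{τ(2)}, a_{τ(3)}), a_{τ(4)}, a_{τ(5)})` vanishes for
arbitrary polynomials. -/
theorem w3_jacobi (a : Fin 5 → ℚ[X]) :
    ∑ τ : Equiv.Perm (Fin 5), (Equiv.Perm.sign τ : ℤ) •
      w3 (w3 (a (τ 0)) (a (τ 1)) (a (τ 2))) (a (τ 3)) (a (τ 4)) = 0 := by
  simp only [W3Aux.sum_perm_succ, Finset.univ_unique, Finset.sum_singleton, Fin.sum_univ_succ,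
    Finset.sum_singleton]
  simp (config := { decide := true }) only [W3Aux.f51, W3Aux.f52, W3Aux.f53, W3Aux.f54,
    W3Aux.f41, W3Aux.f42, W3Aux.f43, W3Aux.f31, W3Aux.f32, W3Aux.f21,
    Equiv.Perm.decomposeFin_symm_apply_zero, Equiv.Perm.decomposeFin_symm_apply_succ,
    Equiv.Perm.decomposeFin.symm_sign, W3Aux.d0, W3Aux.d1, W3Aux.d2, W3Aux.d3, if_true, if_false]
  simp (config := { decide := true }) only [W3Aux.s40, W3Aux.s41, W3Aux.s42, W3Aux.s43,
    W3Aux.s30, W3Aux.s31, W3Aux.s32, W3Aux.s20, W3Aux.s21, W3Aux.s10,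
    W3Aux.d0, W3Aux.d1, W3Aux.d2, W3Aux.d3, Equiv.swap_apply_def, if_true, if_false,
    mul_one, one_mul, neg_neg, neg_mul, mul_neg, Units.val_one, Units.val_neg,
    Int.cast_one, Int.cast_neg, one_smul, neg_smul]
  linear_combination (12 : ℚ[X]) * W3Aux.key (a 0) (a 1) (a 2) (a 3) (a 4) -
      W3Aux.rel_012_1 (a 0) (a 1) (a 2) (a 3) (a 4) +
      W3Aux.rel_012_1 (a 0) (a 1) (a 3) (a 2) (a 4) -
      W3Aux.rel_012_1 (a 0) (a 1) (a 4) (a 2) (a 3) -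
      W3Aux.rel_021_0 (a 0) (a 1) (a 2) (a 3) (a 4) +
      W3Aux.rel_021_1 (a 0) (a 1) (a 2) (a 3) (a 4) -
      W3Aux.rel_012_1 (a 0) (a 2) (a 3) (a 1) (a 4) +
      W3Aux.rel_012_1 (a 0) (a 2) (a 4) (a 1) (a 3) +
      W3Aux.rel_021_0 (a 0) (a 1) (a 3) (a 2) (a 4) -
      W3Aux.rel_021_1 (a 0) (a 1) (a 3) (a 2) (a 4) -
      W3Aux.rel_021_0 (a 0) (a 2) (a 3) (a 1) (a 4) +
      W3Aux.rel_021_1 (a 0) (a 2) (a 3) (a 1) (a 4) -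
      W3Aux.rel_012_1 (a 0) (a 3) (a 4) (a 1) (a 2) -
      W3Aux.rel_021_0 (a 0) (a 1) (a 4) (a 2) (a 3) +
      W3Aux.rel_021_1 (a 0) (a 1) (a 4) (a 2) (a 3) +
      W3Aux.rel_021_0 (a 0) (a 2) (a 4) (a 1) (a 3) -
      W3Aux.rel_021_1 (a 0) (a 2) (a 4) (a 1) (a 3) -
      W3Aux.rel_021_0 (a 0) (a 3) (a 4) (a 1) (a 2) +
      W3Aux.rel_021_1 (a 0) (a 3) (a 4) (a 1) (a 2) -
      W3Aux.rel_102_0 (a 0) (a 1) (a 2) (a 3) (a 4) +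
      W3Aux.rel_102_1 (a 0) (a 1) (a 2) (a 3) (a 4) +
      W3Aux.rel_102_0 (a 0) (a 1) (a 3) (a 2) (a 4) -
      W3Aux.rel_102_1 (a 0) (a 1) (a 3) (a 2) (a 4) -
      W3Aux.rel_102_0 (a 0) (a 1) (a 4) (a 2) (a 3) +
      W3Aux.rel_102_1 (a 0) (a 1) (a 4) (a 2) (a 3) +
      W3Aux.rel_120_0 (a 0) (a 1) (a 2) (a 3) (a 4) -
      W3Aux.rel_120_1 (a 0) (a 1) (a 2) (a 3) (a 4) +
      W3Aux.rel_012_1 (a 1) (a 2) (a 3) (a 0) (a 4) -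
      W3Aux.rel_012_1 (a 1) (a 2) (a 4) (a 0) (a 3) -
      W3Aux.rel_120_0 (a 0) (a 1) (a 3) (a 2) (a 4) +
      W3Aux.rel_120_1 (a 0) (a 1) (a 3) (a 2) (a 4) +
      W3Aux.rel_021_0 (a 1) (a 2) (a 3) (a 0) (a 4) -
      W3Aux.rel_021_1 (a 1) (a 2) (a 3) (a 0) (a 4) +
      W3Aux.rel_012_1 (a 1) (a 3) (a 4) (a 0) (a 2) +
      W3Aux.rel_120_0 (a 0) (a 1) (a 4) (a 2) (a 3) -
      W3Aux.rel_120_1 (a 0) (a 1) (a 4) (a 2) (a 3) -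
      W3Aux.rel_021_0 (a 1) (a 2) (a 4) (a 0) (a 3) +
      W3Aux.rel_021_1 (a 1) (a 2) (a 4) (a 0) (a 3) +
      W3Aux.rel_021_0 (a 1) (a 3) (a 4) (a 0) (a 2) -
      W3Aux.rel_021_1 (a 1) (a 3) (a 4) (a 0) (a 2) +
      W3Aux.rel_201_0 (a 0) (a 1) (a 2) (a 3) (a 4) -
      W3Aux.rel_201_1 (a 0) (a 1) (a 2) (a 3) (a 4) -
      W3Aux.rel_102_0 (a 0) (a 2) (a 3) (a 1) (a 4) +
      W3Aux.rel_102_1 (a 0) (a 2) (a 3) (a 1) (a 4) +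
      W3Aux.rel_102_0 (a 0) (a 2) (a 4) (a 1) (a 3) -
      W3Aux.rel_102_1 (a 0) (a 2) (a 4) (a 1) (a 3) -
      W3Aux.rel_210_0 (a 0) (a 1) (a 2) (a 3) (a 4) +
      W3Aux.rel_210_1 (a 0) (a 1) (a 2) (a 3) (a 4) +
      W3Aux.rel_102_0 (a 1) (a 2) (a 3) (a 0) (a 4) -
      W3Aux.rel_102_1 (a 1) (a 2) (a 3) (a 0) (a 4) -
      W3Aux.rel_102_0 (a 1) (a 2) (a 4) (a 0) (a 3) +
      W3Aux.rel_102_1 (a 1) (a 2) (a 4) (a 0) (a 3) +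
      W3Aux.rel_120_0 (a 0) (a 2) (a 3) (a 1) (a 4) -
      W3Aux.rel_120_1 (a 0) (a 2) (a 3) (a 1) (a 4) -
      W3Aux.rel_120_0 (a 1) (a 2) (a 3) (a 0) (a 4) +
      W3Aux.rel_120_1 (a 1) (a 2) (a 3) (a 0) (a 4) -
      W3Aux.rel_012_1 (a 2) (a 3) (a 4) (a 0) (a 1) -
      W3Aux.rel_120_0 (a 0) (a 2) (a 4) (a 1) (a 3) +
      W3Aux.rel_120_1 (a 0) (a 2) (a 4) (a 1) (a 3) +
      W3Aux.rel_120_0 (a 1) (a 2) (a 4) (a 0) (a 3) -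
      W3Aux.rel_120_1 (a 1) (a 2) (a 4) (a 0) (a 3) -
      W3Aux.rel_021_0 (a 2) (a 3) (a 4) (a 0) (a 1) +
      W3Aux.rel_021_1 (a 2) (a 3) (a 4) (a 0) (a 1) -
      W3Aux.rel_201_0 (a 0) (a 1) (a 3) (a 2) (a 4) +
      W3Aux.rel_201_1 (a 0) (a 1) (a 3) (a 2) (a 4) +
      W3Aux.rel_201_0 (a 0) (a 2) (a 3) (a 1) (a 4) -
      W3Aux.rel_201_1 (a 0) (a 2) (a 3) (a 1) (a 4) -
      W3Aux.rel_102_0 (a 0) (a 3) (a 4) (a 1) (a 2) +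
      W3Aux.rel_102_1 (a 0) (a 3) (a 4) (a 1) (a 2) +
      W3Aux.rel_210_0 (a 0) (a 1) (a 3) (a 2) (a 4) -
      W3Aux.rel_210_1 (a 0) (a 1) (a 3) (a 2) (a 4) -
      W3Aux.rel_201_0 (a 1) (a 2) (a 3) (a 0) (a 4) +
      W3Aux.rel_201_1 (a 1) (a 2) (a 3) (a 0) (a 4) +
      W3Aux.rel_102_0 (a 1) (a 3) (a 4) (a 0) (a 2) -
      W3Aux.rel_102_1 (a 1) (a 3) (a 4) (a 0) (a 2) -
      W3Aux.rel_210_0 (a 0) (a 2) (a 3) (a 1) (a 4) +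
      W3Aux.rel_210_1 (a 0) (a 2) (a 3) (a 1) (a 4) +
      W3Aux.rel_210_0 (a 1) (a 2) (a 3) (a 0) (a 4) -
      W3Aux.rel_210_1 (a 1) (a 2) (a 3) (a 0) (a 4) -
      W3Aux.rel_102_0 (a 2) (a 3) (a 4) (a 0) (a 1) +
      W3Aux.rel_102_1 (a 2) (a 3) (a 4) (a 0) (a 1) +
      W3Aux.rel_120_0 (a 0) (a 3) (a 4) (a 1) (a 2) -
      W3Aux.rel_120_1 (a 0) (a 3) (a 4) (a 1) (a 2) -
      W3Aux.rel_120_0 (a 1) (a 3) (a 4) (a 0) (a 2) +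
      W3Aux.rel_120_1 (a 1) (a 3) (a 4) (a 0) (a 2) +
      W3Aux.rel_120_0 (a 2) (a 3) (a 4) (a 0) (a 1) -
      W3Aux.rel_120_1 (a 2) (a 3) (a 4) (a 0) (a 1) +
      W3Aux.rel_201_0 (a 0) (a 1) (a 4) (a 2) (a 3) -
      W3Aux.rel_201_1 (a 0) (a 1) (a 4) (a 2) (a 3) -
      W3Aux.rel_201_0 (a 0) (a 2) (a 4) (a 1) (a 3) +
      W3Aux.rel_201_1 (a 0) (a 2) (a 4) (a 1) (a 3) +
      W3Aux.rel_201_0 (a 0) (a 3) (a 4) (a 1) (a 2) -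
      W3Aux.rel_201_1 (a 0) (a 3) (a 4) (a 1) (a 2) -
      W3Aux.rel_210_0 (a 0) (a 1) (a 4) (a 2) (a 3) +
      W3Aux.rel_210_1 (a 0) (a 1) (a 4) (a 2) (a 3) +
      W3Aux.rel_201_0 (a 1) (a 2) (a 4) (a 0) (a 3) -
      W3Aux.rel_201_1 (a 1) (a 2) (a 4) (a 0) (a 3) -
      W3Aux.rel_201_0 (a 1) (a 3) (a 4) (a 0) (a 2) +
      W3Aux.rel_201_1 (a 1) (a 3) (a 4) (a 0) (a 2) +
      W3Aux.rel_210_0 (a 0) (a 2) (a 4) (a 1) (a 3) -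
      W3Aux.rel_210_1 (a 0) (a 2) (a 4) (a 1) (a 3) -
      W3Aux.rel_210_0 (a 1) (a 2) (a 4) (a 0) (a 3) +
      W3Aux.rel_210_1 (a 1) (a 2) (a 4) (a 0) (a 3) +
      W3Aux.rel_201_0 (a 2) (a 3) (a 4) (a 0) (a 1) -
      W3Aux.rel_201_1 (a 2) (a 3) (a 4) (a 0) (a 1) -
      W3Aux.rel_210_0 (a 0) (a 3) (a 4) (a 1) (a 2) +
      W3Aux.rel_210_1 (a 0) (a 3) (a 4) (a 1) (a 2) +
      W3Aux.rel_210_0 (a 1) (a 3) (a 4) (a 0) (a 2) -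
      W3Aux.rel_210_1 (a 1) (a 3) (a 4) (a 0) (a 2) -
      W3Aux.rel_210_0 (a 2) (a 3) (a 4) (a 0) (a 1) +
      W3Aux.rel_210_1 (a 2) (a 3) (a 4) (a 0) (a 1)
end
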